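/- Let u ∈ H^{1,2}(B_s(x₀)) with s ≤ 1, and let (∂ᵢu)_{s,x₀} denote the average of ∂ᵢu over B_s(x₀). Then for 0 ≤ r ≤ s, ∫_{B_r(x₀)} |∇u|² dx ≤ C(n)[(r/s)ⁿ ∫_{B_s(x₀)} |∇u|² dx + s² ∫_{B_s(x₀)} |D²u|² dx], where C(n) depends only on the dimension n. -/

import Mathlib

open MeasureTheory
open MeasureTheory Metric Set Module
open scoped ENNReal NNReal

variable {n : ℕ}

lemma aux_affine (G : EuclideanSpace ℝ (Fin n) → ℝ≥0∞) (hG : Measurable G) {a : ℝ}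
    (ha : (1:ℝ)/2 ≤ a) (c : EuclideanSpace ℝ (Fin n)) :
    ∫⁻ w, G (c + a • w) ≤ (2:ℝ≥0∞) ^ n * ∫⁻ w, G w := by
  have ha0 : (0:ℝ) < a := lt_of_lt_of_le (by norm_num) ha
  have hmeas : Measurable fun z : EuclideanSpace ℝ (Fin n) => G (c + z) :=
    hG.comp (measurable_const_add c)
  have h1 : ∫⁻ w, G (c + a • w) = ∫⁻ z, G (c + z) ∂(Measure.map (a • ·) volume) := by
    rw [lintegral_map hmeas (measurable_const_smul a)]
  rw [h1, MeasureTheory.Measure.map_addHaar_smul volume ha0.ne', lintegral_smul_measure,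
    lintegral_add_left_eq_self (fun z => G z) c]
  rw [smul_eq_mul]
  gcongr
  have hfr : finrank ℝ (EuclideanSpace ℝ (Fin n)) = n := finrank_euclideanSpace_fin
  rw [hfr]
  calc ENNReal.ofReal |(a ^ n)⁻¹| ≤ ENNReal.ofReal (2 ^ n) := by
        apply ENNReal.ofReal_le_ofReal
        rw [abs_of_nonneg (by positivity), inv_le_comm₀ (by positivity) (by positivity)]
        calc ((2:ℝ)^n)⁻¹ = (1/2:ℝ)^n := by rw [one_div, inv_pow]
          _ ≤ a ^ n := by gcongr
    _ = (2:ℝ≥0∞) ^ n := by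
        rw [ENNReal.ofReal_pow (by norm_num)]; norm_num

lemma aux_CS (G : ℝ → ℝ≥0∞) (hG : AEMeasurable G (volume.restrict (Ioc (0:ℝ) 1))) :
    (∫⁻ t in Ioc (0:ℝ) 1, G t) ^ 2 ≤ ∫⁻ t in Ioc (0:ℝ) 1, (G t) ^ 2 := by
  have hpq : Real.HolderConjugate 2 2 := by constructor <;> norm_num
  have h := ENNReal.lintegral_mul_le_Lp_mul_Lq (volume.restrict (Ioc (0:ℝ) 1)) hpq hG
    aemeasurable_const (g := fun _ => (1:ℝ≥0∞))
  simp only [Pi.mul_apply, mul_one, ENNReal.one_rpow, lintegral_const,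
    Measure.restrict_apply MeasurableSet.univ, univ_inter, Real.volume_Ioc] at h
  have h2 : ∫⁻ t in Ioc (0:ℝ) 1, G t ≤ (∫⁻ t in Ioc (0:ℝ) 1, G t ^ (2:ℝ)) ^ (1/(2:ℝ)) := by
    calc ∫⁻ t in Ioc (0:ℝ) 1, G t ≤ (∫⁻ t in Ioc (0:ℝ) 1, G t ^ (2:ℝ)) ^ (1/(2:ℝ)) *
        ((1:ℝ≥0∞) * ENNReal.ofReal (1 - 0)) ^ (1/(2:ℝ)) := h
      _ = (∫⁻ t in Ioc (0:ℝ) 1, G t ^ (2:ℝ)) ^ (1/(2:ℝ)) := by norm_num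
  calc (∫⁻ t in Ioc (0:ℝ) 1, G t) ^ 2
      ≤ ((∫⁻ t in Ioc (0:ℝ) 1, G t ^ (2:ℝ)) ^ (1/(2:ℝ))) ^ 2 := by gcongr
    _ = ∫⁻ t in Ioc (0:ℝ) 1, G t ^ (2:ℝ) := by
        rw [← ENNReal.rpow_natCast _ 2, ← ENNReal.rpow_mul]
        norm_num
    _ = ∫⁻ t in Ioc (0:ℝ) 1, G t ^ 2 := by
        congr 1; ext t; rw [← ENNReal.rpow_natCast (G t) 2]; norm_num

section grad
variable {u : EuclideanSpace ℝ (Fin n) → ℝ}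

lemma aux_grad_eq : gradient u =
    (InnerProductSpace.toDual ℝ (EuclideanSpace ℝ (Fin n))).symm ∘ (fderiv ℝ u) := rfl

lemma aux_grad_contDiff (hu : ContDiff ℝ 2 u) : ContDiff ℝ 1 (gradient u) := by
  rw [aux_grad_eq]
  exact (InnerProductSpace.toDual ℝ (EuclideanSpace ℝ (Fin n))).symm.contDiff.comp
    (hu.fderiv_right (by norm_num))

lemma aux_norm_one {F : Type*} [NormedAddCommGroup F] [NormedSpace ℝ F]
    (g : EuclideanSpace ℝ (Fin n) → F) (x) :
    ‖iteratedFDeriv ℝ 1 g x‖ = ‖fderiv ℝ g x‖ := by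
  apply le_antisymm
  · apply ContinuousMultilinearMap.opNorm_le_bound (norm_nonneg _)
    intro m
    rw [iteratedFDeriv_one_apply]
    calc ‖fderiv ℝ g x (m 0)‖ ≤ ‖fderiv ℝ g x‖ * ‖m 0‖ :=
          (fderiv ℝ g x).le_opNorm (m 0)
      _ = ‖fderiv ℝ g x‖ * ∏ i, ‖m i‖ := by rw [Finset.prod_fin_eq_prod_range]; simp
  · apply ContinuousLinearMap.opNorm_le_bound _ (norm_nonneg _)
    intro v
    calc ‖fderiv ℝ g x v‖ = ‖iteratedFDeriv ℝ 1 g x (fun _ => v)‖ := by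
          rw [iteratedFDeriv_one_apply]
      _ ≤ ‖iteratedFDeriv ℝ 1 g x‖ * ∏ _i : Fin 1, ‖v‖ :=
          (iteratedFDeriv ℝ 1 g x).le_opNorm _
      _ = ‖iteratedFDeriv ℝ 1 g x‖ * ‖v‖ := by simp

lemma aux_fderiv_grad_le (hu : ContDiff ℝ 2 u) (z : EuclideanSpace ℝ (Fin n)) :
    ‖fderiv ℝ (gradient u) z‖ ≤ ‖iteratedFDeriv ℝ 2 u z‖ := by
  have h2 : ‖fderiv ℝ (fderiv ℝ u) z‖ = ‖iteratedFDeriv ℝ 2 u z‖ := by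
    rw [← norm_iteratedFDeriv_fderiv (n := 1), aux_norm_one]
  rw [aux_grad_eq, LinearIsometryEquiv.comp_fderiv, ← h2]
  refine ContinuousLinearMap.opNorm_le_bound _ (norm_nonneg (fderiv ℝ (fderiv ℝ u) z)) ?_
  intro v
  rw [ContinuousLinearMap.comp_apply]
  calc ‖(InnerProductSpace.toDual ℝ (EuclideanSpace ℝ (Fin n))).symm.toContinuousLinearEquiv.toContinuousLinearMap
        (fderiv ℝ (fderiv ℝ u) z v)‖ = ‖fderiv ℝ (fderiv ℝ u) z v‖ := by
        simp
    _ ≤ ‖fderiv ℝ (fderiv ℝ u) z‖ * ‖v‖ := (fderiv ℝ (fderiv ℝ u) z).le_opNorm v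

end grad

lemma aux_seg {u : EuclideanSpace ℝ (Fin n) → ℝ} (hu : ContDiff ℝ 2 u)
    {x₀ x y : EuclideanSpace ℝ (Fin n)} {s : ℝ}
    (hx : x ∈ ball x₀ s) (hy : y ∈ ball x₀ s) :
    ‖gradient u x - gradient u y‖ ≤
      (2*s) * ∫ t in (0:ℝ)..1, ‖iteratedFDeriv ℝ 2 u (y + t • (x - y))‖ := by
  set γ : ℝ → EuclideanSpace ℝ (Fin n) := fun t => y + t • (x - y) with hγ
  have hγcont : Continuous γ := by fun_prop
  have hγder : ∀ t : ℝ, HasDerivAt γ (x - y) t := fun t => by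
    simpa [hγ] using ((hasDerivAt_id t).smul_const (x - y)).const_add y
  have hgradC : ContDiff ℝ 1 (gradient u) := aux_grad_contDiff hu
  have hder : ∀ t : ℝ, HasDerivAt (fun t => gradient u (γ t))
      (fderiv ℝ (gradient u) (γ t) (x - y)) t := fun t =>
    ((hgradC.differentiable one_ne_zero (γ t)).hasFDerivAt).comp_hasDerivAt t (hγder t)
  have hA : Continuous fun t => fderiv ℝ (gradient u) (γ t) :=
    (hgradC.continuous_fderiv one_ne_zero).comp hγcont
  have hD : Continuous fun t => fderiv ℝ (gradient u) (γ t) (x - y) :=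
    hA.clm_apply continuous_const
  have hxy : ‖x - y‖ ≤ 2 * s := by
    rw [← dist_eq_norm]
    calc dist x y ≤ dist x x₀ + dist x₀ y := dist_triangle _ _ _
      _ ≤ s + s := add_le_add (mem_ball.1 hx).le (by
          rw [dist_comm]; exact (mem_ball.1 hy).le)
      _ = 2 * s := by ring
  have hftc : ∫ t in (0:ℝ)..1, fderiv ℝ (gradient u) (γ t) (x - y) =
      gradient u x - gradient u y := by
    rw [intervalIntegral.integral_eq_sub_of_hasDerivAt (fun t _ => hder t)
      (hD.intervalIntegrable 0 1)]
    simp [hγ]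
  have hHcont : Continuous fun t => ‖iteratedFDeriv ℝ 2 u (γ t)‖ :=
    ((hu.continuous_iteratedFDeriv (le_refl 2)).comp hγcont).norm
  calc ‖gradient u x - gradient u y‖
      = ‖∫ t in (0:ℝ)..1, fderiv ℝ (gradient u) (γ t) (x - y)‖ := by rw [hftc]
    _ ≤ ∫ t in (0:ℝ)..1, ‖fderiv ℝ (gradient u) (γ t) (x - y)‖ :=
        intervalIntegral.norm_integral_le_integral_norm (by norm_num)
    _ ≤ ∫ t in (0:ℝ)..1, (2*s) * ‖iteratedFDeriv ℝ 2 u (γ t)‖ := by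
        apply intervalIntegral.integral_mono_on (by norm_num)
          (hD.norm.intervalIntegrable 0 1)
          ((continuous_const.mul hHcont).intervalIntegrable 0 1)
        intro t _
        calc ‖fderiv ℝ (gradient u) (γ t) (x - y)‖
            ≤ ‖fderiv ℝ (gradient u) (γ t)‖ * ‖x - y‖ :=
              (fderiv ℝ (gradient u) (γ t)).le_opNorm _
          _ ≤ ‖iteratedFDeriv ℝ 2 u (γ t)‖ * (2*s) := by
              apply mul_le_mul (aux_fderiv_grad_le hu (γ t)) hxy (norm_nonneg _)
                (norm_nonneg _)
          _ = (2*s) * ‖iteratedFDeriv ℝ 2 u (γ t)‖ := mul_comm _ _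
    _ = (2*s) * ∫ t in (0:ℝ)..1, ‖iteratedFDeriv ℝ 2 u (γ t)‖ := by
        rw [intervalIntegral.integral_const_mul]

lemma aux_Q {u : EuclideanSpace ℝ (Fin n) → ℝ} (hu : ContDiff ℝ 2 u)
    {x₀ x y : EuclideanSpace ℝ (Fin n)} {s : ℝ} (hs : 0 ≤ s)
    (hx : x ∈ ball x₀ s) (hy : y ∈ ball x₀ s) :
    (‖gradient u x - gradient u y‖₊ : ℝ≥0∞) ^ 2 ≤ ENNReal.ofReal (4 * s^2) *
      ∫⁻ t in Ioc (0:ℝ) 1, ENNReal.ofReal (‖iteratedFDeriv ℝ 2 u (y + t • (x - y))‖^2) := by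
  set h : ℝ → ℝ := fun t => ‖iteratedFDeriv ℝ 2 u (y + t • (x - y))‖ with hh
  have hHcont : Continuous h := by
    apply Continuous.norm
    exact (hu.continuous_iteratedFDeriv (le_refl 2)).comp (by fun_prop)
  have hInt : IntegrableOn h (Ioc (0:ℝ) 1) :=
    (intervalIntegrable_iff_integrableOn_Ioc_of_le (by norm_num)).1
      (hHcont.intervalIntegrable 0 1)
  have hseg := aux_seg hu hx hy
  rw [intervalIntegral.integral_of_le (by norm_num : (0:ℝ) ≤ 1)] at hseg
  have hQ : (‖gradient u x - gradient u y‖₊ : ℝ≥0∞) ≤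
      ENNReal.ofReal (2*s) * ∫⁻ t in Ioc (0:ℝ) 1, ENNReal.ofReal (h t) := by
    rw [← enorm_eq_nnnorm, ← ofReal_norm_eq_enorm]
    calc ENNReal.ofReal ‖gradient u x - gradient u y‖
        ≤ ENNReal.ofReal ((2*s) * ∫ t in Ioc (0:ℝ) 1, h t) := ENNReal.ofReal_le_ofReal hseg
      _ = ENNReal.ofReal (2*s) * ENNReal.ofReal (∫ t in Ioc (0:ℝ) 1, h t) := by
          rw [ENNReal.ofReal_mul (by linarith)]
      _ = ENNReal.ofReal (2*s) * ∫⁻ t in Ioc (0:ℝ) 1, ENNReal.ofReal (h t) := by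
          rw [ofReal_integral_eq_lintegral_ofReal hInt
            (Filter.Eventually.of_forall fun t => norm_nonneg _)]
  calc (‖gradient u x - gradient u y‖₊ : ℝ≥0∞) ^ 2
      ≤ (ENNReal.ofReal (2*s) * ∫⁻ t in Ioc (0:ℝ) 1, ENNReal.ofReal (h t)) ^ 2 := by gcongr
    _ = ENNReal.ofReal (2*s) ^ 2 * (∫⁻ t in Ioc (0:ℝ) 1, ENNReal.ofReal (h t)) ^ 2 := by
        rw [mul_pow]
    _ ≤ ENNReal.ofReal (2*s) ^ 2 * ∫⁻ t in Ioc (0:ℝ) 1, (ENNReal.ofReal (h t)) ^ 2 := by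
        gcongr
        exact aux_CS _ ((ENNReal.measurable_ofReal.comp hHcont.measurable).aemeasurable)
    _ = ENNReal.ofReal (4 * s^2) * ∫⁻ t in Ioc (0:ℝ) 1, ENNReal.ofReal (h t ^ 2) := by
        congr 1
        · rw [← ENNReal.ofReal_pow (by linarith)]; ring_nf
        · apply lintegral_congr; intro t; rw [ENNReal.ofReal_pow (norm_nonneg _)]

lemma aux_W {s : ℝ} {x₀ : EuclideanSpace ℝ (Fin n)} (G : EuclideanSpace ℝ (Fin n) → ℝ≥0∞)
    (hG : Measurable G) {t : ℝ} (ht : t ∈ Ioc (0:ℝ) 1) :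
    ∫⁻ x in ball x₀ s, ∫⁻ y in ball x₀ s, G (y + t • (x - y)) ≤
      (2:ℝ≥0∞) ^ n * (∫⁻ w, G w) * volume (ball x₀ s) := by
  rcases le_or_gt t (1/2) with h12 | h12
  · -- substitute in y : coefficient 1 - t ≥ 1/2
    have key : ∀ x : EuclideanSpace ℝ (Fin n),
        ∫⁻ y in ball x₀ s, G (y + t • (x - y)) ≤ (2:ℝ≥0∞) ^ n * ∫⁻ w, G w := by
      intro x
      have hrw : ∀ y : EuclideanSpace ℝ (Fin n), y + t • (x - y) = t • x + (1 - t) • y := by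
        intro y; module
      simp only [hrw]
      calc ∫⁻ y in ball x₀ s, G (t • x + (1 - t) • y)
          ≤ ∫⁻ y, G (t • x + (1 - t) • y) := setLIntegral_le_lintegral _ _
        _ ≤ (2:ℝ≥0∞) ^ n * ∫⁻ w, G w := aux_affine G hG (by linarith) _
    calc ∫⁻ x in ball x₀ s, ∫⁻ y in ball x₀ s, G (y + t • (x - y))
        ≤ ∫⁻ _x in ball x₀ s, (2:ℝ≥0∞) ^ n * ∫⁻ w, G w :=
          lintegral_mono fun x => key x
      _ = (2:ℝ≥0∞) ^ n * (∫⁻ w, G w) * volume (ball x₀ s) := setLIntegral_const _ _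
  · -- swap, substitute in x : coefficient t ≥ 1/2
    have hswap : ∫⁻ x in ball x₀ s, ∫⁻ y in ball x₀ s, G (y + t • (x - y)) =
        ∫⁻ y in ball x₀ s, ∫⁻ x in ball x₀ s, G (y + t • (x - y)) := by
      apply lintegral_lintegral_swap
      apply Measurable.aemeasurable
      apply hG.comp
      fun_prop
    rw [hswap]
    have key : ∀ y : EuclideanSpace ℝ (Fin n),
        ∫⁻ x in ball x₀ s, G (y + t • (x - y)) ≤ (2:ℝ≥0∞) ^ n * ∫⁻ w, G w := by
      intro y
      have hrw : ∀ x : EuclideanSpace ℝ (Fin n), y + t • (x - y) = (y - t • y) + t • x := by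
        intro x; module
      simp only [hrw]
      calc ∫⁻ x in ball x₀ s, G ((y - t • y) + t • x)
          ≤ ∫⁻ x, G ((y - t • y) + t • x) := setLIntegral_le_lintegral _ _
        _ ≤ (2:ℝ≥0∞) ^ n * ∫⁻ w, G w := aux_affine G hG (by linarith) _
    calc ∫⁻ y in ball x₀ s, ∫⁻ x in ball x₀ s, G (y + t • (x - y))
        ≤ ∫⁻ _y in ball x₀ s, (2:ℝ≥0∞) ^ n * ∫⁻ w, G w :=
          lintegral_mono fun y => key y
      _ = (2:ℝ≥0∞) ^ n * (∫⁻ w, G w) * volume (ball x₀ s) := setLIntegral_const _ _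

lemma aux_D {u : EuclideanSpace ℝ (Fin n) → ℝ} (hu : ContDiff ℝ 2 u)
    {x₀ : EuclideanSpace ℝ (Fin n)} {s : ℝ} (hs : 0 < s) :
    ∫⁻ x in ball x₀ s, ∫⁻ y in ball x₀ s, (‖gradient u x - gradient u y‖₊ : ℝ≥0∞) ^ 2 ≤
      ENNReal.ofReal (4 * s^2) * ((2:ℝ≥0∞) ^ n *
        (∫⁻ z in ball x₀ s, ENNReal.ofReal (‖iteratedFDeriv ℝ 2 u z‖^2)) *
        volume (ball x₀ s)) := by
  set H : EuclideanSpace ℝ (Fin n) → ℝ := fun z => ‖iteratedFDeriv ℝ 2 u z‖ with hH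
  have hHcont : Continuous H := (hu.continuous_iteratedFDeriv (le_refl 2)).norm
  set G : EuclideanSpace ℝ (Fin n) → ℝ≥0∞ :=
    (ball x₀ s).indicator (fun z => ENNReal.ofReal (H z ^ 2)) with hGdef
  have hGmeas : Measurable G :=
    (ENNReal.measurable_ofReal.comp (hHcont.pow 2).measurable).indicator measurableSet_ball
  have hGint : ∫⁻ w, G w = ∫⁻ z in ball x₀ s, ENNReal.ofReal (H z ^ 2) := by
    rw [hGdef, lintegral_indicator measurableSet_ball]
  -- Φ is measurable in all variables jointly
  have hΦmeas : Measurable fun p : (EuclideanSpace ℝ (Fin n) × EuclideanSpace ℝ (Fin n)) × ℝ =>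
      ENNReal.ofReal (H (p.1.2 + p.2 • (p.1.1 - p.1.2)) ^ 2) := by
    apply ENNReal.measurable_ofReal.comp
    apply Measurable.pow_const
    apply hHcont.measurable.comp
    fun_prop
  -- step 1 : pointwise bound via aux_Q
  have step1 : ∫⁻ x in ball x₀ s, ∫⁻ y in ball x₀ s,
        (‖gradient u x - gradient u y‖₊ : ℝ≥0∞) ^ 2 ≤
      ENNReal.ofReal (4 * s^2) * ∫⁻ x in ball x₀ s, ∫⁻ y in ball x₀ s,
        ∫⁻ t in Ioc (0:ℝ) 1, ENNReal.ofReal (H (y + t • (x - y)) ^ 2) := by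
    rw [← lintegral_const_mul' _ _ ENNReal.ofReal_ne_top]
    apply setLIntegral_mono' measurableSet_ball
    intro x hx
    rw [← lintegral_const_mul' _ _ ENNReal.ofReal_ne_top]
    apply setLIntegral_mono' measurableSet_ball
    intro y hy
    exact aux_Q hu hs.le hx hy
  refine le_trans step1 ?_
  gcongr
  -- step 2 : reorder with Tonelli
  have swap1 : ∀ x : EuclideanSpace ℝ (Fin n),
      ∫⁻ y in ball x₀ s, ∫⁻ t in Ioc (0:ℝ) 1, ENNReal.ofReal (H (y + t • (x - y)) ^ 2) =
      ∫⁻ t in Ioc (0:ℝ) 1, ∫⁻ y in ball x₀ s, ENNReal.ofReal (H (y + t • (x - y)) ^ 2) := by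
    intro x
    apply lintegral_lintegral_swap
    apply Measurable.aemeasurable
    apply ENNReal.measurable_ofReal.comp
    apply Measurable.pow_const
    apply hHcont.measurable.comp
    fun_prop
  simp only [swap1]
  have swap2 : ∫⁻ x in ball x₀ s, ∫⁻ t in Ioc (0:ℝ) 1,
        ∫⁻ y in ball x₀ s, ENNReal.ofReal (H (y + t • (x - y)) ^ 2) =
      ∫⁻ t in Ioc (0:ℝ) 1, ∫⁻ x in ball x₀ s,
        ∫⁻ y in ball x₀ s, ENNReal.ofReal (H (y + t • (x - y)) ^ 2) := by
    apply lintegral_lintegral_swap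
    apply Measurable.aemeasurable
    have : Measurable fun p : (EuclideanSpace ℝ (Fin n)) × ℝ =>
        ∫⁻ y in ball x₀ s, ENNReal.ofReal (H (y + p.2 • (p.1 - y)) ^ 2) := by
      apply Measurable.lintegral_prod_right'
        (f := fun q : ((EuclideanSpace ℝ (Fin n)) × ℝ) × EuclideanSpace ℝ (Fin n) =>
          ENNReal.ofReal (H (q.2 + q.1.2 • (q.1.1 - q.2)) ^ 2))
      apply ENNReal.measurable_ofReal.comp
      apply Measurable.pow_const
      apply hHcont.measurable.comp
      fun_prop
    exact this
  rw [swap2]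
  -- step 3 : for each t, replace by the indicator and use aux_W
  calc ∫⁻ t in Ioc (0:ℝ) 1, ∫⁻ x in ball x₀ s,
        ∫⁻ y in ball x₀ s, ENNReal.ofReal (H (y + t • (x - y)) ^ 2)
      = ∫⁻ t in Ioc (0:ℝ) 1, ∫⁻ x in ball x₀ s, ∫⁻ y in ball x₀ s, G (y + t • (x - y)) := by
        apply setLIntegral_congr_fun measurableSet_Ioc
        intro t ht
        apply setLIntegral_congr_fun measurableSet_ball
        intro x hx
        apply setLIntegral_congr_fun measurableSet_ball
        intro y hy
        have hmem : y + t • (x - y) ∈ ball x₀ s := by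
          have : (1 - t) • y + t • x ∈ ball x₀ s :=
            (convex_ball x₀ s) hy hx (by linarith [ht.2]) ht.1.le (by ring)
          have hrw : y + t • (x - y) = (1 - t) • y + t • x := by module
          rwa [hrw]
        exact (indicator_of_mem hmem (fun z => ENNReal.ofReal (H z ^ 2))).symm
    _ ≤ ∫⁻ _t in Ioc (0:ℝ) 1, (2:ℝ≥0∞) ^ n * (∫⁻ w, G w) * volume (ball x₀ s) := by
        apply setLIntegral_mono' measurableSet_Ioc
        intro t ht
        exact aux_W G hGmeas ht
    _ = (2:ℝ≥0∞) ^ n * (∫⁻ w, G w) * volume (ball x₀ s) := by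
        rw [setLIntegral_const, Real.volume_Ioc]
        norm_num
    _ = (2:ℝ≥0∞) ^ n * (∫⁻ z in ball x₀ s, ENNReal.ofReal (H z ^ 2)) *
        volume (ball x₀ s) := by rw [hGint]

lemma aux_master {u : EuclideanSpace ℝ (Fin n) → ℝ} (hu : ContDiff ℝ 2 u)
    {x₀ : EuclideanSpace ℝ (Fin n)} {r s : ℝ} (hr : 0 ≤ r) (hrs : r ≤ s) (hs : 0 < s)
    (hn : 1 ≤ n) :
    ∫⁻ x in ball x₀ r, ENNReal.ofReal (‖gradient u x‖^2) ≤
      2 * ENNReal.ofReal ((r/s)^n) * (∫⁻ x in ball x₀ s, ENNReal.ofReal (‖gradient u x‖^2)) +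
      2^(n+3) * ENNReal.ofReal (s^2) *
        (∫⁻ z in ball x₀ s, ENNReal.ofReal (‖iteratedFDeriv ℝ 2 u z‖^2)) := by
  haveI : Nonempty (Fin n) := ⟨⟨0, hn⟩⟩
  haveI : Nontrivial (EuclideanSpace ℝ (Fin n)) := by
    refine ⟨⟨EuclideanSpace.single ⟨0, hn⟩ 1, 0, fun h => ?_⟩⟩
    have := congrArg (fun v : EuclideanSpace ℝ (Fin n) => v ⟨0, hn⟩) h
    simp [EuclideanSpace.single_apply] at this
  have hconv : ∀ v : EuclideanSpace ℝ (Fin n),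
      ENNReal.ofReal (‖v‖^2) = (‖v‖₊ : ℝ≥0∞) ^ 2 := fun v => by
    rw [ENNReal.ofReal_pow (norm_nonneg _), ofReal_norm_eq_enorm, enorm_eq_nnnorm]
  set F : EuclideanSpace ℝ (Fin n) → ℝ := fun z => ‖gradient u z‖ with hF
  have hFcont : Continuous F := by
    apply Continuous.norm
    exact (aux_grad_contDiff hu).continuous
  set Is := ∫⁻ x in ball x₀ s, ENNReal.ofReal (F x ^2) with hIs
  set J := ∫⁻ z in ball x₀ s, ENNReal.ofReal (‖iteratedFDeriv ℝ 2 u z‖^2) with hJ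
  set Ir := ∫⁻ x in ball x₀ r, ENNReal.ofReal (F x ^2) with hIr
  have hμs_ne_top : volume (ball x₀ s) ≠ ⊤ := measure_ball_lt_top.ne
  have hμs_ne_zero : volume (ball x₀ s) ≠ 0 := (measure_ball_pos volume x₀ hs).ne'
  -- pointwise + averaging bound
  have key : volume (ball x₀ s) * Ir ≤ 2 * volume (ball x₀ r) * Is +
      2 * ∫⁻ x in ball x₀ s, ∫⁻ y in ball x₀ s,
        (‖gradient u x - gradient u y‖₊ : ℝ≥0∞) ^ 2 := by
    have pointw : ∀ x y : EuclideanSpace ℝ (Fin n),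
        ENNReal.ofReal (F x ^2) ≤ 2 * ENNReal.ofReal (F y ^2) +
          2 * (‖gradient u x - gradient u y‖₊ : ℝ≥0∞) ^ 2 := by
      intro x y
      have hreal : F x ^2 ≤ 2 * F y ^2 + 2 * ‖gradient u x - gradient u y‖^2 := by
        have h1 : F x ≤ F y + ‖gradient u x - gradient u y‖ := by
          rw [hF]; simpa using norm_le_norm_add_norm_sub' (gradient u x) (gradient u y)
        nlinarith [norm_nonneg (gradient u x - gradient u y), norm_nonneg (gradient u y),
          norm_nonneg (gradient u x), sq_nonneg (F y - ‖gradient u x - gradient u y‖)]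
      calc ENNReal.ofReal (F x ^2)
          ≤ ENNReal.ofReal (2 * F y ^2 + 2 * ‖gradient u x - gradient u y‖^2) :=
            ENNReal.ofReal_le_ofReal hreal
        _ ≤ 2 * ENNReal.ofReal (F y ^2) + 2 * (‖gradient u x - gradient u y‖₊ : ℝ≥0∞) ^ 2 := by
            rw [ENNReal.ofReal_add (by positivity) (by positivity),
              ENNReal.ofReal_mul (by norm_num), ENNReal.ofReal_mul (by norm_num),
              hconv (gradient u x - gradient u y)]
            norm_num
    have inner : ∀ x : EuclideanSpace ℝ (Fin n),
        volume (ball x₀ s) * ENNReal.ofReal (F x ^2) ≤ 2 * Is +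
          2 * ∫⁻ y in ball x₀ s, (‖gradient u x - gradient u y‖₊ : ℝ≥0∞) ^ 2 := by
      intro x
      calc volume (ball x₀ s) * ENNReal.ofReal (F x ^2)
          = ∫⁻ _y in ball x₀ s, ENNReal.ofReal (F x ^2) := by
            rw [setLIntegral_const]; ring
        _ ≤ ∫⁻ y in ball x₀ s, (2 * ENNReal.ofReal (F y ^2) +
            2 * (‖gradient u x - gradient u y‖₊ : ℝ≥0∞) ^ 2) :=
            lintegral_mono fun y => pointw x y
        _ = (∫⁻ y in ball x₀ s, 2 * ENNReal.ofReal (F y ^2)) +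
            ∫⁻ y in ball x₀ s, 2 * (‖gradient u x - gradient u y‖₊ : ℝ≥0∞) ^ 2 := by
            apply lintegral_add_left
            exact (measurable_const.mul
              (ENNReal.measurable_ofReal.comp (hFcont.pow 2).measurable))
        _ = 2 * Is + 2 * ∫⁻ y in ball x₀ s, (‖gradient u x - gradient u y‖₊ : ℝ≥0∞) ^ 2 := by
            rw [lintegral_const_mul' _ _ (by norm_num), lintegral_const_mul' _ _ (by norm_num)]
    calc volume (ball x₀ s) * Ir
        = ∫⁻ x in ball x₀ r, volume (ball x₀ s) * ENNReal.ofReal (F x ^2) := by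
          rw [lintegral_const_mul' _ _ hμs_ne_top]
      _ ≤ ∫⁻ x in ball x₀ r, (2 * Is +
          2 * ∫⁻ y in ball x₀ s, (‖gradient u x - gradient u y‖₊ : ℝ≥0∞) ^ 2) :=
          lintegral_mono fun x => inner x
      _ = (∫⁻ _x in ball x₀ r, 2 * Is) +
          ∫⁻ x in ball x₀ r, 2 * ∫⁻ y in ball x₀ s,
            (‖gradient u x - gradient u y‖₊ : ℝ≥0∞) ^ 2 :=
          lintegral_add_left measurable_const _
      _ ≤ 2 * volume (ball x₀ r) * Is + 2 * ∫⁻ x in ball x₀ s,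
          ∫⁻ y in ball x₀ s, (‖gradient u x - gradient u y‖₊ : ℝ≥0∞) ^ 2 := by
          apply add_le_add
          · rw [setLIntegral_const]; rw [mul_comm (2 * Is)]; rw [mul_assoc]
            exact le_of_eq (by ring)
          · rw [lintegral_const_mul' _ _ (by norm_num)]
            gcongr
  -- combine with aux_D
  have hD := aux_D hu (x₀ := x₀) hs
  have key2 : volume (ball x₀ s) * Ir ≤ 2 * volume (ball x₀ r) * Is +
      volume (ball x₀ s) * (2^(n+3) * ENNReal.ofReal (s^2) * J) := by
    refine le_trans key (add_le_add le_rfl ?_)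
    calc 2 * ∫⁻ x in ball x₀ s, ∫⁻ y in ball x₀ s,
          (‖gradient u x - gradient u y‖₊ : ℝ≥0∞) ^ 2
        ≤ 2 * (ENNReal.ofReal (4 * s^2) * ((2:ℝ≥0∞) ^ n * J * volume (ball x₀ s))) := by
          gcongr
      _ = volume (ball x₀ s) * (2^(n+3) * ENNReal.ofReal (s^2) * J) := by
          rw [show (4 : ℝ) * s^2 = s^2 * 4 by ring, ENNReal.ofReal_mul (by positivity),
            show ENNReal.ofReal (4:ℝ) = 4 by norm_num]
          rw [pow_add]
          ring
  -- rewrite volume of small ball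
  have hμr : volume (ball x₀ r) = ENNReal.ofReal ((r/s)^n) * volume (ball x₀ s) := by
    rw [Measure.addHaar_ball volume x₀ hr, Measure.addHaar_ball volume x₀ hs.le,
      finrank_euclideanSpace_fin, ← mul_assoc, ← ENNReal.ofReal_mul (by positivity),
      ← mul_pow, div_mul_cancel₀ _ hs.ne']
  rw [hμr] at key2
  have key3 : volume (ball x₀ s) * Ir ≤ volume (ball x₀ s) *
      (2 * ENNReal.ofReal ((r/s)^n) * Is + 2^(n+3) * ENNReal.ofReal (s^2) * J) := by
    refine le_trans key2 (le_of_eq ?_)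
    ring
  rwa [ENNReal.mul_le_mul_iff_right hμs_ne_zero hμs_ne_top] at key3



/-- Key bootstrap estimate of Lemma 2.5 (la:bootstrap1_buck): there is a constant `C(n)`
such that for every `H²` function `u` on a ball and all `0 ≤ r ≤ s ≤ 1`,
`∫_{B_r(x₀)} |∇u|² ≤ C(n) [(r/s)ⁿ ∫_{B_s(x₀)} |∇u|² + s² ∫_{B_s(x₀)} |D²u|²]`. -/
theorem gradient_morrey_estimate (n : ℕ) (hn : 1 ≤ n) :
    ∃ C > (0 : ℝ), ∀ u : EuclideanSpace ℝ (Fin n) → ℝ, ContDiff ℝ 2 u →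
      ∀ (x₀ : EuclideanSpace ℝ (Fin n)) (r s : ℝ), 0 ≤ r → r ≤ s → s ≤ 1 → 0 < s →
        (∫ x in Metric.ball x₀ r, ‖gradient u x‖ ^ 2) ≤
          C * ((r / s) ^ n * (∫ x in Metric.ball x₀ s, ‖gradient u x‖ ^ 2) +
            s ^ 2 * ∫ x in Metric.ball x₀ s, ‖iteratedFDeriv ℝ 2 u x‖ ^ 2) := by
  refine ⟨2^(n+3), by positivity, ?_⟩
  intro u hu x₀ r s hr hrs hs1 hs
  have hFcont : Continuous fun z => ‖gradient u z‖^2 :=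
    ((aux_grad_contDiff hu).continuous.norm).pow 2
  have hHcont : Continuous fun z => ‖iteratedFDeriv ℝ 2 u z‖^2 :=
    ((hu.continuous_iteratedFDeriv (le_refl 2)).norm).pow 2
  -- conversions between Bochner integrals and lintegrals
  have convgen : ∀ (g : EuclideanSpace ℝ (Fin n) → ℝ), Continuous g → (∀ z, 0 ≤ g z) →
      ∀ ρ : ℝ, ∫ x in ball x₀ ρ, g x = (∫⁻ x in ball x₀ ρ, ENNReal.ofReal (g x)).toReal := by
    intro g hg hg0 ρ
    rw [integral_eq_lintegral_of_nonneg_ae (Filter.Eventually.of_forall fun x => hg0 x)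
      hg.aestronglyMeasurable]
  have finlem : ∀ (g : EuclideanSpace ℝ (Fin n) → ℝ), Continuous g → (∀ z, 0 ≤ g z) →
      (∫⁻ x in ball x₀ s, ENNReal.ofReal (g x)) ≠ ⊤ := by
    intro g hg hg0
    have hInt : IntegrableOn g (ball x₀ s) :=
      (hg.continuousOn.integrableOn_compact (isCompact_closedBall x₀ s)).mono_set
        ball_subset_closedBall
    have heq : (∫⁻ x in ball x₀ s, ENNReal.ofReal (g x)) =
        ∫⁻ x in ball x₀ s, (‖g x‖₊ : ℝ≥0∞) := by
      apply lintegral_congr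
      intro x
      rw [← enorm_eq_nnnorm, ← ofReal_norm_eq_enorm, Real.norm_of_nonneg (hg0 x)]
    rw [heq]
    exact hInt.2.ne
  set Ir := ∫⁻ x in ball x₀ r, ENNReal.ofReal (‖gradient u x‖^2) with hIr
  set Is := ∫⁻ x in ball x₀ s, ENNReal.ofReal (‖gradient u x‖^2) with hIs
  set J := ∫⁻ z in ball x₀ s, ENNReal.ofReal (‖iteratedFDeriv ℝ 2 u z‖^2) with hJ
  have hIs_ne : Is ≠ ⊤ := finlem _ hFcont (fun z => by positivity)
  have hJ_ne : J ≠ ⊤ := finlem _ hHcont (fun z => by positivity)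
  have master := aux_master hu (x₀ := x₀) hr hrs hs hn
  have hRHS_ne : 2 * ENNReal.ofReal ((r/s)^n) * Is +
      2^(n+3) * ENNReal.ofReal (s^2) * J ≠ ⊤ := by
    apply ENNReal.add_ne_top.2
    constructor
    · exact ENNReal.mul_ne_top (ENNReal.mul_ne_top (by norm_num) ENNReal.ofReal_ne_top) hIs_ne
    · exact ENNReal.mul_ne_top (ENNReal.mul_ne_top
        (by simp [ENNReal.pow_ne_top]) ENNReal.ofReal_ne_top) hJ_ne
  have hmono := ENNReal.toReal_mono hRHS_ne master
  rw [convgen _ hFcont (fun z => by positivity) r,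
    convgen _ hFcont (fun z => by positivity) s,
    convgen _ hHcont (fun z => by positivity) s]
  refine le_trans hmono ?_
  rw [ENNReal.toReal_add (ENNReal.mul_ne_top (ENNReal.mul_ne_top (by norm_num)
      ENNReal.ofReal_ne_top) hIs_ne)
    (ENNReal.mul_ne_top (ENNReal.mul_ne_top (by simp [ENNReal.pow_ne_top])
      ENNReal.ofReal_ne_top) hJ_ne),
    ENNReal.toReal_mul, ENNReal.toReal_mul, ENNReal.toReal_mul, ENNReal.toReal_mul,
    ENNReal.toReal_ofReal (by positivity), ENNReal.toReal_ofReal (by positivity)]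
  have h2 : ((2:ℝ≥0∞)).toReal = 2 := by norm_num
  have h3 : ((2:ℝ≥0∞)^(n+3)).toReal = 2^(n+3) := by
    rw [ENNReal.toReal_pow]; norm_num
  rw [h2, h3]
  have hA : 0 ≤ Is.toReal := ENNReal.toReal_nonneg
  have hB : 0 ≤ J.toReal := ENNReal.toReal_nonneg
  have hpow : (0:ℝ) ≤ (r/s)^n := by positivity
  have h2le : (2:ℝ) ≤ 2^(n+3) := by
    calc (2:ℝ) = 2^1 := by norm_num
      _ ≤ 2^(n+3) := by apply pow_le_pow_right₀ (by norm_num); omega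
  nlinarith [mul_nonneg hpow hA, mul_nonneg (sq_nonneg s) hB]
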